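/- If a joint degree matrix J satisfies the graphicality conditions (D_k integral for all k; J_{k,l} ≤ D_k·D_l for k ≠ l; J_{k,k} ≤ C(D_k,2)), then the associated degree sequence, consisting of D_k copies of each degree k sorted in non-increasing order, satisfies the Erdős–Gallai condition. -/

import Mathlib

/-- The implied number of degree-`k` vertices derived from a joint degree matrix `J`
(with support contained in degrees `< N`): `D_k = (J_{k,k} + Σ_l J_{k,l}) / k`. -/
def Dof (N : ℕ) (J : ℕ → ℕ → ℕ) (k : ℕ) : ℕ :=
  (J k k + ∑ l ∈ Finset.range N, J k l) / k

/-!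
Sort the vertices by degree class. If `t` is the `(k+1)`-st largest degree (or `0` when `k`
is the whole length), the first `k` entries are all `D_c` vertices of each class `c > t`
together with `m` copies of `t`, and `k = s + m` with `s = Σ_{c > t} D_c`. Since
`c · D_c = J_{c,c} + Σ_l J_{c,l}`, the degree sum of the classes above `t` counts edge ends
inside them (at most `s (s - 1)`), towards class `t`, and towards each lower class `l`
(at most `min l s · D_l`); this is the Erdős–Gallai bound when `m = 0`. When `m > 0` the class
`t` is split: spreading its edges evenly over its `D_t` vertices, i.e. multiplying through by
`D_t` and using `t · D_t = 2 J_{t,t} + Σ_{l ≠ t} J_{t,l}`, the cost of the split is absorbed by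
the diagonal bound `2 J_{t,t} ≤ D_t (D_t - 1)` when `k ≤ t`, and by the row of class `t` itself
when `t < k`.
-/

open Finset

theorem sum_map_eq_sum_range_mul_count {N : ℕ} {e : List ℕ} (he : ∀ x ∈ e, x < N)
    (f : ℕ → ℕ) : (e.map f).sum = ∑ c ∈ range N, f c * e.count c := by
  rw [sum_list_map_count, sum_subset (fun x hx => mem_range.2 (he x (List.mem_toFinset.1 hx)))
    fun c _ hc => by simp [List.count_eq_zero_of_not_mem (mt List.mem_toFinset.2 hc)]]
  exact sum_congr rfl fun c _ => by rw [smul_eq_mul, mul_comm]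

def classesAbove (N t : ℕ) : Finset ℕ := (range N).filter (t < ·)

def classesBelow (N t : ℕ) : Finset ℕ := (range N).filter (· < t)

theorem sum_range_eq_sum_classesAbove_add_add_sum_classesBelow {M : Type*} [AddCommMonoid M]
    {N t : ℕ} (htN : t < N) (g : ℕ → M) :
    ∑ c ∈ range N, g c = ∑ c ∈ classesAbove N t, g c + g t + ∑ c ∈ classesBelow N t, g c := by
  have hsplit : range N = classesAbove N t ∪ ({t} ∪ classesBelow N t) := by
    ext c; simp only [classesAbove, classesBelow, mem_union, mem_filter, mem_range,
      mem_singleton]; omega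
  rw [hsplit, sum_union, sum_union, sum_singleton, add_assoc]
  · simp [classesBelow]
  · rw [disjoint_union_right]
    constructor
    · simp [classesAbove]
    · simp only [classesAbove, classesBelow, disjoint_left, mem_filter]; omega

theorem List.exists_threshold {d : List ℕ} (hsort : d.Pairwise (· ≥ ·)) (h0 : 0 ∉ d) (k : ℕ) :
    ∃ t, (∀ x ∈ d.take k, t ≤ x) ∧ (∀ x ∈ d.drop k, x ≤ t) ∧
      (t ∈ d.drop k ∨ t ∉ d.take k) := by
  have hsep := (List.pairwise_append.1 ((d.take_append_drop k).symm ▸ hsort)).2.2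
  rcases lt_or_ge k d.length with hk | hk
  · have hdrop := List.drop_eq_getElem_cons hk
    refine ⟨d[k], fun x hx => hsep x hx _ (hdrop ▸ List.mem_cons_self), fun x hx => ?_,
      .inl (hdrop ▸ List.mem_cons_self)⟩
    have hcons := (List.pairwise_append.1 ((d.take_append_drop k).symm ▸ hsort)).2.1
    rw [hdrop, List.pairwise_cons] at hcons
    rw [hdrop, List.mem_cons] at hx
    rcases hx with rfl | hx
    · exact le_rfl
    · exact hcons.1 x hx
  · refine ⟨0, fun x _ => x.zero_le, fun x hx => by simp [List.drop_eq_nil_of_le hk] at hx,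
      .inr (by rwa [List.take_of_length_le hk])⟩

section Threshold

variable {d : List ℕ} {D : ℕ → ℕ} {N t k : ℕ}

theorem count_take_add_count_drop (hcnt : ∀ c, d.count c = D c) (c : ℕ) :
    (d.take k).count c + (d.drop k).count c = D c := by
  rw [← List.count_append, List.take_append_drop, hcnt]

theorem sum_map_take_eq (hcnt : ∀ c, d.count c = D c) (hN : ∀ x ∈ d, x < N) (htN : t < N)
    (htake : ∀ x ∈ d.take k, t ≤ x) (hdrop : ∀ x ∈ d.drop k, x ≤ t) (f : ℕ → ℕ) :
    ((d.take k).map f).sum = ∑ c ∈ classesAbove N t, f c * D c + f t * (d.take k).count t := by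
  rw [sum_map_eq_sum_range_mul_count (fun x hx => hN x (List.mem_of_mem_take hx)),
    sum_range_eq_sum_classesAbove_add_add_sum_classesBelow htN]
  have habove : ∀ c ∈ classesAbove N t, f c * (d.take k).count c = f c * D c := by
    intro c hc
    have htc : t < c := (mem_filter.1 hc).2
    have := count_take_add_count_drop (k := k) hcnt c
    rw [List.count_eq_zero.2 fun h => (hdrop c h).not_gt htc] at this
    rw [← this, add_zero]
  have hbelow : ∀ c ∈ classesBelow N t, f c * (d.take k).count c = 0 := fun c hc => by
    rw [List.count_eq_zero.2 fun h => (htake c h).not_gt (mem_filter.1 hc).2, mul_zero]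
  rw [sum_congr rfl habove, sum_eq_zero hbelow, add_zero]

theorem sum_map_drop_eq (hcnt : ∀ c, d.count c = D c) (hN : ∀ x ∈ d, x < N) (htN : t < N)
    (htake : ∀ x ∈ d.take k, t ≤ x) (hdrop : ∀ x ∈ d.drop k, x ≤ t) (f : ℕ → ℕ) :
    ((d.drop k).map f).sum
      = f t * (D t - (d.take k).count t) + ∑ c ∈ classesBelow N t, f c * D c := by
  rw [sum_map_eq_sum_range_mul_count (fun x hx => hN x (List.mem_of_mem_drop hx)),
    sum_range_eq_sum_classesAbove_add_add_sum_classesBelow htN]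
  have habove : ∀ c ∈ classesAbove N t, f c * (d.drop k).count c = 0 := fun c hc => by
    rw [List.count_eq_zero.2 fun h => (hdrop c h).not_gt (mem_filter.1 hc).2, mul_zero]
  have hbelow : ∀ c ∈ classesBelow N t, f c * (d.drop k).count c = f c * D c := by
    intro c hc
    have := count_take_add_count_drop (k := k) hcnt c
    rw [List.count_eq_zero.2 fun h => (htake c h).not_gt (mem_filter.1 hc).2] at this
    rw [← this, zero_add]
  have hat := count_take_add_count_drop (k := k) hcnt t
  rw [sum_eq_zero habove, sum_congr rfl hbelow, zero_add, ← hat, Nat.add_sub_cancel_left]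

end Threshold

theorem threshold_arith_of_le {s m t D E X : ℕ} (hmD : m < D) (hE : E + s ≤ s * s)
    (hXs : X ≤ s * D) (hXt : X ≤ t * D) (htk : t ≤ s + m) :
    E + X + m * t ≤ (s + m) * (s + m - 1) + t * (D - m) := by
  rcases Nat.eq_zero_or_pos (s + m) with h | h
  · obtain ⟨rfl, rfl⟩ : s = 0 ∧ m = 0 := by omega
    simp_all
  zify [hmD.le, h] at *
  rcases le_or_gt t s with hts | hst
  · nlinarith [mul_le_mul_of_nonneg_left (show (t : ℤ) ≤ s by exact_mod_cast hts)
        (by positivity : (0 : ℤ) ≤ m),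
      (show (m : ℤ) ≤ m * m by exact_mod_cast Nat.le_mul_self m)]
  · nlinarith [mul_nonneg (by omega : (0 : ℤ) ≤ t - s) (by omega : (0 : ℤ) ≤ D - m - 1),
      mul_nonneg (by omega : (0 : ℤ) ≤ s + m - t) (by omega : (0 : ℤ) ≤ m - 1)]

theorem threshold_arith_of_ge {s m t D E X J : ℕ} (hmD : m ≤ D) (hE : E + s ≤ s * s)
    (hXs : X ≤ s * D) (hJ : 2 * J + D ≤ D * D) (hkt : s + m ≤ t) :
    D * E + (D + m) * X + m * (2 * J)
      ≤ D * ((s + m) * (s + m - 1)) + D * ((s + m) * (D - m)) := by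
  rcases Nat.eq_zero_or_pos (s + m) with h | h
  · obtain ⟨rfl, rfl⟩ : s = 0 ∧ m = 0 := by omega
    simp_all
  zify [hmD, h] at *
  nlinarith [mul_le_mul_of_nonneg_left hE (by positivity : (0 : ℤ) ≤ D),
    mul_le_mul_of_nonneg_left hXs (by positivity : (0 : ℤ) ≤ D + m),
    mul_le_mul_of_nonneg_left hJ (by positivity : (0 : ℤ) ≤ m)]

theorem threshold_arith {s m t D E X J : ℕ} (hmD : m < D) (hE : E + s ≤ s * s)
    (hXs : X ≤ s * D) (hrow : 2 * J + X ≤ t * D) (hJ : 2 * J + D ≤ D * D) :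
    D * E + (D + m) * X + m * (2 * J)
      ≤ D * ((s + m) * (s + m - 1)) + D * (min t (s + m) * (D - m)) := by
  rcases le_total t (s + m) with htk | hkt
  · rw [min_eq_left htk, ← mul_add]
    calc D * E + (D + m) * X + m * (2 * J) ≤ D * (E + X + m * t) := by
          nlinarith [Nat.mul_le_mul_left m hrow]
      _ ≤ D * ((s + m) * (s + m - 1) + t * (D - m)) :=
          Nat.mul_le_mul_left D (threshold_arith_of_le hmD hE hXs (by omega) htk)
  · rw [min_eq_right hkt]
    exact threshold_arith_of_ge hmD.le hE hXs hJ hkt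

theorem two_mul_choose_two_add_self (n : ℕ) : 2 * n.choose 2 + n = n * n := by
  rw [Nat.choose_two_right, Nat.mul_div_cancel' (Nat.even_mul_pred_self _).two_dvd]
  cases n <;> simp [Nat.mul_succ]

section JointDegreeMatrix

variable {N : ℕ} {J : ℕ → ℕ → ℕ}

theorem Dof_zero : Dof N J 0 = 0 := Nat.div_zero _

theorem Dof_eq_zero_of_le (hsupp : ∀ k l, N ≤ k → J k l = 0) {c : ℕ} (hc : N ≤ c) :
    Dof N J c = 0 := by
  simp [Dof, hsupp c _ hc]

theorem mul_Dof (hint : ∀ k, 0 < k → k ∣ (J k k + ∑ l ∈ range N, J k l)) {c : ℕ} (hc : 0 < c) :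
    c * Dof N J c = J c c + ∑ l ∈ range N, J c l :=
  Nat.mul_div_cancel' (hint c hc)

theorem two_mul_add_Dof_le (h3 : ∀ k, J k k ≤ (Dof N J k).choose 2) (c : ℕ) :
    2 * J c c + Dof N J c ≤ Dof N J c * Dof N J c := by
  have := two_mul_choose_two_add_self (Dof N J c)
  have := h3 c
  omega

theorem eq_zero_of_Dof_eq_zero (h2 : ∀ k l, k ≠ l → J k l ≤ Dof N J k * Dof N J l)
    (h3 : ∀ k, J k k ≤ (Dof N J k).choose 2) {l : ℕ} (hl : Dof N J l = 0) (c : ℕ) :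
    J c l = 0 := by
  rcases eq_or_ne c l with rfl | hcl
  · simpa [hl] using h3 c
  · simpa [hl] using h2 c l hcl

theorem sum_col_le_mul_Dof (hsym : ∀ k l, J k l = J l k)
    (hint : ∀ k, 0 < k → k ∣ (J k k + ∑ l ∈ range N, J k l))
    (h2 : ∀ k l, k ≠ l → J k l ≤ Dof N J k * Dof N J l) (h3 : ∀ k, J k k ≤ (Dof N J k).choose 2)
    {F : Finset ℕ} (hF : F ⊆ range N) (l : ℕ) :
    ∑ c ∈ F, J c l ≤ l * Dof N J l := by
  rcases Nat.eq_zero_or_pos l with rfl | hl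
  · simp [eq_zero_of_Dof_eq_zero h2 h3 Dof_zero]
  · calc ∑ c ∈ F, J c l = ∑ c ∈ F, J l c := sum_congr rfl fun c _ => hsym c l
      _ ≤ ∑ c ∈ range N, J l c := sum_le_sum_of_subset hF
      _ ≤ l * Dof N J l := mul_Dof hint hl ▸ Nat.le_add_left _ _

theorem sum_col_le_sum_Dof_mul (h2 : ∀ k l, k ≠ l → J k l ≤ Dof N J k * Dof N J l)
    {F : Finset ℕ} {l : ℕ} (hl : l ∉ F) :
    ∑ c ∈ F, J c l ≤ (∑ c ∈ F, Dof N J c) * Dof N J l := by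
  rw [sum_mul]
  exact sum_le_sum fun c hc => h2 c l (ne_of_mem_of_not_mem hc hl)

theorem sum_col_le_min_mul (hsym : ∀ k l, J k l = J l k)
    (hint : ∀ k, 0 < k → k ∣ (J k k + ∑ l ∈ range N, J k l))
    (h2 : ∀ k l, k ≠ l → J k l ≤ Dof N J k * Dof N J l) (h3 : ∀ k, J k k ≤ (Dof N J k).choose 2)
    {F : Finset ℕ} (hF : F ⊆ range N) {l : ℕ} (hl : l ∉ F) :
    ∑ c ∈ F, J c l ≤ min l (∑ c ∈ F, Dof N J c) * Dof N J l := by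
  rw [min_mul_of_nonneg _ _ (Nat.zero_le _)]
  exact le_min (sum_col_le_mul_Dof hsym hint h2 h3 hF l) (sum_col_le_sum_Dof_mul h2 hl)

theorem sum_internal_add_le (h2 : ∀ k l, k ≠ l → J k l ≤ Dof N J k * Dof N J l)
    (h3 : ∀ k, J k k ≤ (Dof N J k).choose 2) (F : Finset ℕ) :
    ∑ c ∈ F, (J c c + ∑ l ∈ F, J c l) + ∑ c ∈ F, Dof N J c
      ≤ (∑ c ∈ F, Dof N J c) * ∑ c ∈ F, Dof N J c := by
  rw [← sum_add_distrib, sum_mul]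
  refine sum_le_sum fun c hc => ?_
  have hoff : ∑ l ∈ F.erase c, J c l ≤ Dof N J c * ∑ l ∈ F.erase c, Dof N J l := by
    rw [mul_sum]
    exact sum_le_sum fun l hl => h2 c l (ne_of_mem_erase hl).symm
  rw [← add_sum_erase F _ hc, ← add_sum_erase F _ hc, mul_add]
  have := two_mul_add_Dof_le h3 c
  omega

theorem sum_classesAbove_mul_Dof (hint : ∀ k, 0 < k → k ∣ (J k k + ∑ l ∈ range N, J k l))
    {t : ℕ} (htN : t < N) :
    ∑ c ∈ classesAbove N t, c * Dof N J c
      = ∑ c ∈ classesAbove N t, (J c c + ∑ l ∈ classesAbove N t, J c l)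
        + ∑ c ∈ classesAbove N t, J c t
        + ∑ l ∈ classesBelow N t, ∑ c ∈ classesAbove N t, J c l := by
  rw [sum_comm, ← sum_add_distrib, ← sum_add_distrib]
  refine sum_congr rfl fun c hc => ?_
  rw [mul_Dof hint (Nat.zero_lt_of_lt (mem_filter.1 hc).2),
    sum_range_eq_sum_classesAbove_add_add_sum_classesBelow htN]
  ring

theorem mul_Dof_eq_two_mul_add (hsym : ∀ k l, J k l = J l k)
    (hint : ∀ k, 0 < k → k ∣ (J k k + ∑ l ∈ range N, J k l)) {t : ℕ} (ht : 0 < t) (htN : t < N) :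
    t * Dof N J t
      = 2 * J t t + ∑ c ∈ classesAbove N t, J c t + ∑ l ∈ classesBelow N t, J t l := by
  rw [mul_Dof hint ht, sum_range_eq_sum_classesAbove_add_add_sum_classesBelow htN,
    sum_congr rfl fun c _ => hsym t c]
  ring

theorem sum_classesAbove_mul_Dof_le (hsym : ∀ k l, J k l = J l k)
    (hint : ∀ k, 0 < k → k ∣ (J k k + ∑ l ∈ range N, J k l))
    (h2 : ∀ k l, k ≠ l → J k l ≤ Dof N J k * Dof N J l) (h3 : ∀ k, J k k ≤ (Dof N J k).choose 2)
    {t s : ℕ} (htN : t < N) (hs : ∑ c ∈ classesAbove N t, Dof N J c = s) :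
    ∑ c ∈ classesAbove N t, c * Dof N J c
      ≤ s * (s - 1) + min t s * Dof N J t + ∑ l ∈ classesBelow N t, min l s * Dof N J l := by
  have hA : classesAbove N t ⊆ range N := filter_subset _ _
  have hE := hs ▸ sum_internal_add_le h2 h3 (classesAbove N t)
  have hX := hs ▸ sum_col_le_min_mul hsym hint h2 h3 hA (l := t) (by simp [classesAbove])
  have hY : ∑ l ∈ classesBelow N t, ∑ c ∈ classesAbove N t, J c l
      ≤ ∑ l ∈ classesBelow N t, min l s * Dof N J l :=
    sum_le_sum fun l hl => hs ▸ sum_col_le_min_mul hsym hint h2 h3 hA (by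
      simp only [classesAbove, classesBelow, mem_filter] at hl ⊢; omega)
  rw [sum_classesAbove_mul_Dof hint htN, Nat.mul_sub_one]
  omega

theorem weighted_sum_col_le (hsym : ∀ k l, J k l = J l k)
    (hint : ∀ k, 0 < k → k ∣ (J k k + ∑ l ∈ range N, J k l))
    (h2 : ∀ k l, k ≠ l → J k l ≤ Dof N J k * Dof N J l) (h3 : ∀ k, J k k ≤ (Dof N J k).choose 2)
    {t s m l : ℕ} (htN : t < N) (hs : ∑ c ∈ classesAbove N t, Dof N J c = s)
    (hmD : m ≤ Dof N J t) (hl : l ∈ classesBelow N t) :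
    Dof N J t * ∑ c ∈ classesAbove N t, J c l + m * J t l
      ≤ Dof N J t * (min l (s + m) * Dof N J l) := by
  have hlt : l < t := (mem_filter.1 hl).2
  have htA : t ∉ classesAbove N t := by simp [classesAbove]
  rcases le_total l (s + m) with hlk | hkl
  · rw [min_eq_left hlk]
    have hcol := sum_col_le_mul_Dof hsym hint h2 h3 (F := insert t (classesAbove N t))
      (insert_subset (mem_range.2 htN) (filter_subset _ _)) l
    rw [sum_insert htA] at hcol
    calc Dof N J t * ∑ c ∈ classesAbove N t, J c l + m * J t l
        ≤ Dof N J t * (J t l + ∑ c ∈ classesAbove N t, J c l) := by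
          nlinarith [Nat.mul_le_mul_right (J t l) hmD]
      _ ≤ Dof N J t * (l * Dof N J l) := Nat.mul_le_mul_left _ hcol
  · rw [min_eq_right hkl]
    have hY := hs ▸ sum_col_le_sum_Dof_mul h2 (F := classesAbove N t) (l := l) (by
      simp only [classesAbove, mem_filter]; omega)
    nlinarith [Nat.mul_le_mul_left (Dof N J t) hY, Nat.mul_le_mul_left m (h2 t l hlt.ne')]

theorem threshold_ineq_of_lt_Dof (hsym : ∀ k l, J k l = J l k)
    (hint : ∀ k, 0 < k → k ∣ (J k k + ∑ l ∈ range N, J k l))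
    (h2 : ∀ k l, k ≠ l → J k l ≤ Dof N J k * Dof N J l) (h3 : ∀ k, J k k ≤ (Dof N J k).choose 2)
    {t s m : ℕ} (htN : t < N) (hs : ∑ c ∈ classesAbove N t, Dof N J c = s)
    (hmD : m < Dof N J t) :
    ∑ c ∈ classesAbove N t, c * Dof N J c + t * m
      ≤ (s + m) * (s + m - 1) + min t (s + m) * (Dof N J t - m)
        + ∑ l ∈ classesBelow N t, min l (s + m) * Dof N J l := by
  have hD : 0 < Dof N J t := by omega
  have ht : 0 < t := Nat.pos_of_ne_zero fun h => by simp [h, Dof_zero] at hD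
  have hrow := mul_Dof_eq_two_mul_add hsym hint ht htN
  have hcols : Dof N J t * ∑ l ∈ classesBelow N t, ∑ c ∈ classesAbove N t, J c l
      + m * ∑ l ∈ classesBelow N t, J t l
      ≤ Dof N J t * ∑ l ∈ classesBelow N t, min l (s + m) * Dof N J l := by
    rw [mul_sum, mul_sum, mul_sum, ← sum_add_distrib]
    exact sum_le_sum fun l hl => weighted_sum_col_le hsym hint h2 h3 htN hs hmD.le hl
  have harith := threshold_arith (t := t) hmD (hs ▸ sum_internal_add_le h2 h3 _)
    (hs ▸ sum_col_le_sum_Dof_mul h2 (l := t) (by simp [classesAbove])) (by omega)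
    (two_mul_add_Dof_le h3 t)
  refine Nat.le_of_mul_le_mul_left ?_ hD
  rw [sum_classesAbove_mul_Dof hint htN]
  nlinarith [hrow, hcols, harith]

theorem threshold_ineq (hsym : ∀ k l, J k l = J l k)
    (hint : ∀ k, 0 < k → k ∣ (J k k + ∑ l ∈ range N, J k l))
    (h2 : ∀ k l, k ≠ l → J k l ≤ Dof N J k * Dof N J l) (h3 : ∀ k, J k k ≤ (Dof N J k).choose 2)
    {t m k : ℕ} (htN : t < N) (hm : m = 0 ∨ m < Dof N J t)
    (hk : ∑ c ∈ classesAbove N t, Dof N J c + m = k) :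
    ∑ c ∈ classesAbove N t, c * Dof N J c + t * m
      ≤ k * (k - 1) + min t k * (Dof N J t - m) + ∑ l ∈ classesBelow N t, min l k * Dof N J l := by
  subst hk
  rcases hm with rfl | hmD
  · simpa using sum_classesAbove_mul_Dof_le hsym hint h2 h3 htN rfl
  · exact threshold_ineq_of_lt_Dof hsym hint h2 h3 htN rfl hmD

end JointDegreeMatrix

theorem stmt5_general (N : ℕ) (J : ℕ → ℕ → ℕ)
    (hsym : ∀ k l, J k l = J l k)
    (hsupp : ∀ k l, N ≤ k → J k l = 0)
    (hint : ∀ k, 0 < k → k ∣ (J k k + ∑ l ∈ Finset.range N, J k l))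
    (h2 : ∀ k l, k ≠ l → J k l ≤ Dof N J k * Dof N J l)
    (h3 : ∀ k, J k k ≤ (Dof N J k).choose 2)
    (d : List ℕ) (hsort : d.Pairwise (· ≥ ·))
    (hcount : ∀ k, 0 < k → d.count k = Dof N J k)
    (hnz : d.count 0 = 0) :
    ∀ k ≤ d.length,
      (d.take k).sum ≤ k * (k - 1) + ((d.drop k).map (fun x => min x k)).sum := by
  intro k hk
  rcases Nat.eq_zero_or_pos k with rfl | hk0
  · simp
  have hcnt : ∀ c, d.count c = Dof N J c := fun c =>
    (Nat.eq_zero_or_pos c).elim (fun h => h ▸ hnz.trans Dof_zero.symm) (hcount c)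
  have hN : ∀ x ∈ d, x < N := fun x hx => by
    by_contra! hx'
    exact List.count_eq_zero.1 ((hcnt x).trans (Dof_eq_zero_of_le hsupp hx')) hx
  obtain ⟨t, htake, hdrop, ht⟩ := List.exists_threshold hsort (List.count_eq_zero.1 hnz) k
  obtain ⟨x, hx⟩ := List.exists_mem_of_length_pos (l := d.take k) (by simp; omega)
  have htN : t < N := (htake x hx).trans_lt (hN x (List.mem_of_mem_take hx))
  have hm : (d.take k).count t = 0 ∨ (d.take k).count t < Dof N J t := by
    have := count_take_add_count_drop (k := k) hcnt t
    rcases ht with ht | ht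
    · exact .inr (by have := List.count_pos_iff.2 ht; omega)
    · exact .inl (List.count_eq_zero.2 ht)
  have hlen := sum_map_take_eq hcnt hN htN htake hdrop (fun _ => 1)
  simp only [List.map_const', List.sum_replicate, smul_eq_mul, mul_one, one_mul,
    List.length_take, min_eq_left hk] at hlen
  have hsum := sum_map_take_eq hcnt hN htN htake hdrop id
  simp only [List.map_id, id] at hsum
  rw [hsum, sum_map_drop_eq hcnt hN htN htake hdrop, ← add_assoc]
  exact threshold_ineq hsym hint h2 h3 htN hm hlen.symm

/-- If a joint degree matrix `J` satisfies the graphicality conditions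
(`D_k` integral for all `k`; `J_{k,l} ≤ D_k·D_l` for `k ≠ l`; `J_{k,k} ≤ C(D_k,2)`),
then the associated degree sequence (each degree `k > 0` listed with multiplicity
`D_k`, sorted in non-increasing order) satisfies the Erdős–Gallai condition. -/
theorem stmt5 (N : ℕ) (J : ℕ → ℕ → ℕ)
    (hsym : ∀ k l, J k l = J l k)
    (hzero : ∀ l, J 0 l = 0)
    (hsupp : ∀ k l, N ≤ k → J k l = 0)
    (hint : ∀ k, 0 < k → k ∣ (J k k + ∑ l ∈ Finset.range N, J k l))
    (h2 : ∀ k l, k ≠ l → J k l ≤ Dof N J k * Dof N J l)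
    (h3 : ∀ k, J k k ≤ (Dof N J k).choose 2)
    (d : List ℕ) (hsort : d.Pairwise (· ≥ ·))
    (hcount : ∀ k, 0 < k → d.count k = Dof N J k)
    (hnz : d.count 0 = 0) :
    ∀ k ≤ d.length,
      (d.take k).sum ≤ k * (k - 1) + ((d.drop k).map (fun x => min x k)).sum :=
  stmt5_general N J hsym hsupp hint h2 h3 d hsort hcount hnz
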